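/- arXiv:2604.23138 — 2 statements merged into one kernel-verified Lean document; each statement's English description precedes it below -/
import Mathlib

section
/- Let S be a finite set of non-mixed Pauli strings on n qubits (each string contains at most one type of Pauli matrix among {X, Y, Z}, all other tensor factors being the identity). Then the chromatic number of the commutation graph C(S) is at most 3. Concretely, the coloring that assigns to each string the Pauli type (X, Y, or Z) occurring in it is a proper 3-coloring of C(S). -/
open Matrix

noncomputable section

/-- The 2×2 identity matrix. -/
def pI : Matrix (Fin 2) (Fin 2) ℂ := 1

/-- The Pauli X matrix. -/
def pX : Matrix (Fin 2) (Fin 2) ℂ := !![0, 1; 1, 0]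

/-- The Pauli Y matrix. -/
def pY : Matrix (Fin 2) (Fin 2) ℂ := !![0, -Complex.I; Complex.I, 0]

/-- The Pauli Z matrix. -/
def pZ : Matrix (Fin 2) (Fin 2) ℂ := !![1, 0; 0, -1]

/-- A Pauli string on `n` qubits: each tensor factor is one of `I, X, Y, Z`. -/
def IsPauliString {n : ℕ} (s : Fin n → Matrix (Fin 2) (Fin 2) ℂ) : Prop :=
  ∀ i, s i = pI ∨ s i = pX ∨ s i = pY ∨ s i = pZ

/-- The Kronecker (tensor) product of a family of 2×2 matrices, as a matrix
indexed by tuples of indices. -/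
def kron {n : ℕ} (s : Fin n → Matrix (Fin 2) (Fin 2) ℂ) :
    Matrix (Fin n → Fin 2) (Fin n → Fin 2) ℂ :=
  Matrix.of fun x y => ∏ i, s i (x i) (y i)

/-- Two Pauli strings commute if their associated Kronecker-product operators commute. -/
def PauliCommute {n : ℕ} (P Q : Fin n → Matrix (Fin 2) (Fin 2) ℂ) : Prop :=
  kron P * kron Q = kron Q * kron P

/-- The commutation graph of a finite set of Pauli strings: two distinct strings are
adjacent iff their associated operators do not commute. -/
def commutationGraph {n : ℕ} (S : Finset (Fin n → Matrix (Fin 2) (Fin 2) ℂ)) :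
    SimpleGraph {P // P ∈ S} where
  Adj P Q := P ≠ Q ∧ ¬ PauliCommute P.1 Q.1
  symm := by
    constructor
    intro P Q h
    exact ⟨h.1.symm, fun hc => h.2 hc.symm⟩
  loopless := ⟨fun P h => h.1 rfl⟩

lemma kron_mul {n : ℕ} (P Q : Fin n → Matrix (Fin 2) (Fin 2) ℂ) :
    kron P * kron Q = kron (fun i => P i * Q i) := by
  ext x y
  simp only [kron, Matrix.mul_apply, Matrix.of_apply]
  rw [Finset.prod_univ_sum, ← Fintype.piFinset_univ]
  exact Finset.sum_congr rfl fun z _ => (Finset.prod_mul_distrib).symm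

lemma pauliCommute_of_factors {n : ℕ} (P Q : Fin n → Matrix (Fin 2) (Fin 2) ℂ)
    (h : ∀ i, P i * Q i = Q i * P i) : PauliCommute P Q := by
  unfold PauliCommute
  rw [kron_mul, kron_mul, funext h]

lemma pX_ne_pY : pX ≠ pY := by
  intro h
  have := congrFun (congrFun h 0) 1
  simp [pX, pY, Complex.ext_iff] at this

lemma pX_ne_pZ : pX ≠ pZ := by
  intro h
  have := congrFun (congrFun h 0) 1
  simp [pX, pZ, Complex.ext_iff] at this

lemma pY_ne_pZ : pY ≠ pZ := by
  intro h
  have := congrFun (congrFun h 0) 1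
  simp [pY, pZ, Complex.ext_iff] at this

/-- **XYZ-Coloring.** If every string in `S` is a non-mixed Pauli string
(witnessed by the type function `ty`: every non-identity factor of `P` equals
`ty P ∈ {X, Y, Z}`), then `ty` is a proper coloring of the commutation graph
(adjacent strings get different Pauli types), and the chromatic number of the
commutation graph is at most 3. -/
theorem xyz_coloring {n : ℕ} (S : Finset (Fin n → Matrix (Fin 2) (Fin 2) ℂ))
    (hS : ∀ P ∈ S, IsPauliString P)
    (ty : (Fin n → Matrix (Fin 2) (Fin 2) ℂ) → Matrix (Fin 2) (Fin 2) ℂ)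
    (hty : ∀ P ∈ S, (ty P = pX ∨ ty P = pY ∨ ty P = pZ) ∧ ∀ i, P i = pI ∨ P i = ty P) :
    (∀ P Q : {P // P ∈ S}, (commutationGraph S).Adj P Q → ty P.1 ≠ ty Q.1) ∧
      (commutationGraph S).chromaticNumber ≤ 3 := by
  have key : ∀ P Q : {P // P ∈ S}, (commutationGraph S).Adj P Q → ty P.1 ≠ ty Q.1 := by
    intro P Q hadj hdeq
    apply hadj.2
    apply pauliCommute_of_factors
    intro i
    rcases (hty P.1 P.2).2 i with hp | hp <;> rcases (hty Q.1 Q.2).2 i with hq | hq <;>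
      simp [hp, hq, pI, hdeq]
  refine ⟨key, ?_⟩
  have c : (commutationGraph S).Coloring (Fin 3) := by
    refine SimpleGraph.Coloring.mk
      (fun P => if ty P.1 = pX then 0 else if ty P.1 = pY then 1 else 2) ?_
    intro P Q hadj h
    have hne := key P Q hadj
    rcases (hty P.1 P.2).1 with h1 | h1 | h1 <;> rcases (hty Q.1 Q.2).1 with h2 | h2 | h2 <;>
      first
      | exact hne (h1.trans h2.symm)
      | simp [h1, h2, pX_ne_pY, pX_ne_pZ, pY_ne_pZ, Ne.symm pX_ne_pY, Ne.symm pX_ne_pZ,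
          Ne.symm pY_ne_pZ] at h
  have := c.colorable.chromaticNumber_le
  simpa using this
end
end

section
/- Let k ≥ 2 and let S be a finite set of Pauli strings on k qubits, each of which has the form α_j α_{j+1} for some α ∈ {X, Y, Z} and some j ∈ {1, ..., k-1} (i.e., the string equals α at positions j and j+1 and the identity elsewhere). Then the chromatic number of the commutation graph C(S) is at most 2. Concretely, coloring each string α_j α_{j+1} by the parity of j is a proper 2-coloring of C(S). -/
open Matrix

noncomputable section

/-- The Pauli string `α_j α_{j+1}`: equal to `α` at positions `j` and `j+1`
and the identity elsewhere.  (Positions are 0-indexed: `j ∈ {0, …, k-2}`.) -/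
def twoSite (k : ℕ) (α : Matrix (Fin 2) (Fin 2) ℂ) (j : ℕ) :
    Fin k → Matrix (Fin 2) (Fin 2) ℂ :=
  fun i => if i.val = j ∨ i.val = j + 1 then α else pI


lemma hXY : pX * pY = -(pY * pX) := by
  ext i j; fin_cases i <;> fin_cases j <;>
    simp [pX, pY, Matrix.mul_apply, Fin.sum_univ_two]
lemma hXZ : pX * pZ = -(pZ * pX) := by
  ext i j; fin_cases i <;> fin_cases j <;>
    simp [pX, pZ, Matrix.mul_apply, Fin.sum_univ_two]
lemma hYZ : pY * pZ = -(pZ * pY) := by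
  ext i j; fin_cases i <;> fin_cases j <;>
    simp [pY, pZ, Matrix.mul_apply, Fin.sum_univ_two]
lemma hYX : pY * pX = -(pX * pY) := by rw [hXY, neg_neg]
lemma hZX : pZ * pX = -(pX * pZ) := by rw [hXZ, neg_neg]
lemma hZY : pZ * pY = -(pY * pZ) := by rw [hYZ, neg_neg]

lemma pauli_anticomm {α β : Matrix (Fin 2) (Fin 2) ℂ}
    (hα : α = pX ∨ α = pY ∨ α = pZ) (hβ : β = pX ∨ β = pY ∨ β = pZ)
    (hne : α ≠ β) : α * β = -(β * α) := by
  rcases hα with rfl | rfl | rfl <;> rcases hβ with rfl | rfl | rfl <;>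
    first
      | exact absurd rfl hne
      | exact hXY | exact hXZ | exact hYZ | exact hYX | exact hZX | exact hZY

lemma commute_of_pointwise {n : ℕ} {P Q : Fin n → Matrix (Fin 2) (Fin 2) ℂ}
    (h : ∀ i, P i * Q i = Q i * P i) : PauliCommute P Q := by
  unfold PauliCommute
  rw [kron_mul, kron_mul, show (fun i => P i * Q i) = fun i => Q i * P i from funext h]

lemma anticomm_pair {n : ℕ} {P Q : Fin n → Matrix (Fin 2) (Fin 2) ℂ} {a b : Fin n}
    (hab : a ≠ b)
    (h1 : P a * Q a = -(Q a * P a)) (h2 : P b * Q b = -(Q b * P b))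
    (h3 : ∀ i, i ≠ a → i ≠ b → P i * Q i = Q i * P i) : PauliCommute P Q := by
  unfold PauliCommute
  rw [kron_mul, kron_mul]
  ext x y
  show (∏ i, (P i * Q i) (x i) (y i)) = ∏ i, (Q i * P i) (x i) (y i)
  rw [← Finset.prod_mul_prod_compl ({a, b} : Finset (Fin n)),
      ← Finset.prod_mul_prod_compl ({a, b} : Finset (Fin n))]
  congr 1
  · rw [Finset.prod_pair hab, Finset.prod_pair hab, h1, h2]
    simp [Matrix.neg_apply]
  · apply Finset.prod_congr rfl
    intro i hi
    simp only [Finset.mem_compl, Finset.mem_insert, Finset.mem_singleton] at hi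
    push_neg at hi
    rw [h3 i hi.1 hi.2]

lemma key_commute {k : ℕ} (α β : Matrix (Fin 2) (Fin 2) ℂ) (j l : ℕ)
    (hα : α = pX ∨ α = pY ∨ α = pZ) (hβ : β = pX ∨ β = pY ∨ β = pZ)
    (hj : j + 1 < k) (hl : l + 1 < k) (hpar : j % 2 = l % 2) :
    PauliCommute (twoSite k α j) (twoSite k β l) := by
  by_cases hjl : j = l
  · subst hjl
    by_cases hab : α = β
    · subst hab; rfl
    · apply anticomm_pair (a := (⟨j, by omega⟩ : Fin k)) (b := (⟨j + 1, hj⟩ : Fin k))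
        (by simp [Fin.ext_iff])
      · simpa [twoSite] using pauli_anticomm hα hβ hab
      · simpa [twoSite] using pauli_anticomm hα hβ hab
      · intro i hia hib
        have h1 : i.val ≠ j := fun h => hia (Fin.ext h)
        have h2 : i.val ≠ j + 1 := fun h => hib (Fin.ext h)
        simp [twoSite, h1, h2]
  · apply commute_of_pointwise
    intro i
    unfold twoSite
    split_ifs with h1 h2 h2
    · exfalso; omega
    · simp [pI]
    · simp [pI]
    · rfl

/-- **Handcrafted 2-coloring for 1D nearest-neighbour strings.**  If every string
in `S` has the form `α_j α_{j+1}` with `α ∈ {X, Y, Z}`, then (a) any two such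
strings whose left positions `j` have the same parity commute (so coloring by
the parity of `j` is a proper 2-coloring), and (b) the chromatic number of the
commutation graph is at most 2. -/
theorem handcrafted_two_coloring {k : ℕ} (hk : 2 ≤ k)
    (S : Finset (Fin k → Matrix (Fin 2) (Fin 2) ℂ))
    (hS : ∀ P ∈ S, ∃ α j, (α = pX ∨ α = pY ∨ α = pZ) ∧ j + 1 < k ∧ P = twoSite k α j) :
    (∀ P ∈ S, ∀ Q ∈ S, ∀ (α β : Matrix (Fin 2) (Fin 2) ℂ) (j l : ℕ),
        (α = pX ∨ α = pY ∨ α = pZ) → (β = pX ∨ β = pY ∨ β = pZ) →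
        j + 1 < k → l + 1 < k → P = twoSite k α j → Q = twoSite k β l →
        j % 2 = l % 2 → PauliCommute P Q) ∧
      (commutationGraph S).chromaticNumber ≤ 2 := by
  have key : ∀ P ∈ S, ∀ Q ∈ S, ∀ (α β : Matrix (Fin 2) (Fin 2) ℂ) (j l : ℕ),
      (α = pX ∨ α = pY ∨ α = pZ) → (β = pX ∨ β = pY ∨ β = pZ) →
      j + 1 < k → l + 1 < k → P = twoSite k α j → Q = twoSite k β l →
      j % 2 = l % 2 → PauliCommute P Q := by
    intro P _ Q _ α β j l hα hβ hj hl hPj hQl hpar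
    subst hPj hQl
    exact key_commute α β j l hα hβ hj hl hpar
  refine ⟨key, ?_⟩
  have col : (commutationGraph S).Colorable 2 := by
    refine ⟨SimpleGraph.Coloring.mk
      (fun P => (⟨(hS P.1 P.2).choose_spec.choose % 2, by omega⟩ : Fin 2)) ?_⟩
    intro P Q hAdj hcol
    obtain ⟨hα, hj, hPeq⟩ := (hS P.1 P.2).choose_spec.choose_spec
    obtain ⟨hβ, hl, hQeq⟩ := (hS Q.1 Q.2).choose_spec.choose_spec
    exact hAdj.2 (key P.1 P.2 Q.1 Q.2 _ _ _ _ hα hβ hj hl hPeq hQeq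
      (by simpa [Fin.ext_iff] using hcol))
  exact_mod_cast col.chromaticNumber_le
end
end
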